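/- For all k, l ∈ ℕ, the convolution of Schreier families satisfies S_{l+k} = S_l[S_k] = S_k[S_l], where P[Q] = {⋃_{i=1}^d F_i : F_1 < ... < F_d, each F_i ∈ Q, {min F_i}_{i=1}^d ∈ P}. -/

import Mathlib

/-- The first Schreier family: finite sets `F` with `|F| ≤ min F`. -/
def SchreierOne : Set (Finset ℕ) := {F | ∀ k ∈ F, F.card ≤ k}

/-- The minimum of a finite set of naturals (0 for the empty set). -/
noncomputable def finMin (F : Finset ℕ) : ℕ := sInf {k | k ∈ F}

/-- The convolution `P[Q]` of two families of finite subsets of ℕ: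
unions of successive members of `Q` whose minima form a set in `P`. -/
def conv (P Q : Set (Finset ℕ)) : Set (Finset ℕ) :=
  {U | ∃ (d : ℕ) (F : Fin d → Finset ℕ),
    (∀ i, F i ∈ Q) ∧ (∀ i, (F i).Nonempty) ∧
    (∀ i j : Fin d, i < j → ∀ a ∈ F i, ∀ b ∈ F j, a < b) ∧
    (Finset.univ.image fun i => finMin (F i)) ∈ P ∧
    U = Finset.univ.biUnion F}

/-- The modified convolution `P[Q]_M`: unions of pairwise disjoint members of `Q`
whose minima form a set in `P`. -/
def mconv (P Q : Set (Finset ℕ)) : Set (Finset ℕ) :=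
  {U | ∃ (d : ℕ) (F : Fin d → Finset ℕ),
    (∀ i, F i ∈ Q) ∧ (∀ i, (F i).Nonempty) ∧
    (∀ i j : Fin d, i ≠ j → Disjoint (F i) (F j)) ∧
    (Finset.univ.image fun i => finMin (F i)) ∈ P ∧
    U = Finset.univ.biUnion F}

/-- The Schreier families `S_n` (indexed so that `Schreier 1 = S_1`,
`Schreier (n+1) = S_1[S_n]`). -/
def Schreier : ℕ → Set (Finset ℕ)
  | 0 => {F | F.card ≤ 1}
  | 1 => SchreierOne
  | (n+2) => conv SchreierOne (Schreier (n+1))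

/-- The modified Schreier families `S^M_n`. -/
def SchreierM : ℕ → Set (Finset ℕ)
  | 0 => {F | F.card ≤ 1}
  | 1 => SchreierOne
  | (n+2) => mconv SchreierOne (SchreierM (n+1))

/-!
Since `S_{n+1} = S_1[S_n]`, induction on `l` reduces the theorem to associativity of the
convolution, `P[Q[R]] = P[Q][R]`, and `S_l[S_k] = S_{l+k} = S_k[S_l]` then follows by symmetry
of `l + k`. For associativity, a set in `P[Q[R]]` is a union of `Q[R]`-blocks, each itself a
union of `R`-blocks; flattening gives `R`-blocks whose minima are grouped, block by block, into
sets of `Q` whose own minima are those of the outer blocks, hence form a set of `P`.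
Conversely, an element of `P[Q][R]` is regrouped by collecting the `R`-blocks whose minima lie
in a common `Q`-block of the decomposition of the set of minima.
-/

open Finset

def BlockLt (E F : Finset ℕ) : Prop := ∀ a ∈ E, ∀ b ∈ F, a < b

theorem BlockLt.mono {E E' F F' : Finset ℕ} (h : BlockLt E F) (hE : E' ⊆ E) (hF : F' ⊆ F) :
    BlockLt E' F' :=
  fun a ha b hb => h a (hE ha) b (hF hb)

theorem finMin_mem {F : Finset ℕ} (h : F.Nonempty) : finMin F ∈ F := Nat.sInf_mem h

theorem finMin_le {F : Finset ℕ} {a : ℕ} (h : a ∈ F) : finMin F ≤ a := Nat.sInf_le h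

theorem BlockLt.finMin_lt {E F : Finset ℕ} (h : BlockLt E F) (hE : E.Nonempty)
    (hF : F.Nonempty) : finMin E < finMin F :=
  h _ (finMin_mem hE) _ (finMin_mem hF)

theorem image_finMin_subset_biUnion {𝒢 : Finset (Finset ℕ)} (hne : ∀ G ∈ 𝒢, G.Nonempty) :
    𝒢.image finMin ⊆ 𝒢.biUnion id := by
  intro a ha
  obtain ⟨G, hG, rfl⟩ := mem_image.1 ha
  exact mem_biUnion.2 ⟨G, hG, finMin_mem (hne G hG)⟩

theorem finMin_biUnion {𝒢 : Finset (Finset ℕ)} (hne : ∀ G ∈ 𝒢, G.Nonempty) :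
    finMin (𝒢.biUnion id) = finMin (𝒢.image finMin) := by
  rcases 𝒢.eq_empty_or_nonempty with rfl | h𝒢
  · rfl
  apply le_antisymm
  · obtain ⟨G, hG, hGmin⟩ := mem_image.1 (finMin_mem (h𝒢.image finMin))
    rw [← hGmin]
    exact finMin_le (mem_biUnion.2 ⟨G, hG, finMin_mem (hne G hG)⟩)
  · obtain ⟨G, hG, hmin⟩ := mem_biUnion.1 (finMin_mem (h𝒢.biUnion fun G hG => hne G hG))
    exact (finMin_le (mem_image_of_mem finMin hG)).trans (finMin_le hmin)

theorem IsChain.blockLt_of_finMin_lt {𝒢 : Finset (Finset ℕ)}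
    (h𝒢 : IsChain BlockLt (𝒢 : Set (Finset ℕ))) (hne : ∀ G ∈ 𝒢, G.Nonempty)
    {G G' : Finset ℕ} (hG : G ∈ 𝒢) (hG' : G' ∈ 𝒢) (hlt : finMin G < finMin G') :
    BlockLt G G' := by
  have hGG' : G ≠ G' := by rintro rfl; exact hlt.false
  refine (h𝒢 hG hG' hGG').resolve_right fun h => ?_
  exact (h.finMin_lt (hne G' hG') (hne G hG)).asymm hlt

theorem IsChain.eq_of_finMin_eq {𝒢 : Finset (Finset ℕ)}
    (h𝒢 : IsChain BlockLt (𝒢 : Set (Finset ℕ))) (hne : ∀ G ∈ 𝒢, G.Nonempty)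
    {G G' : Finset ℕ} (hG : G ∈ 𝒢) (hG' : G' ∈ 𝒢) (h : finMin G = finMin G') : G = G' := by
  by_contra hGG'
  rcases h𝒢 hG hG' hGG' with h' | h'
  · exact (h'.finMin_lt (hne G hG) (hne G' hG')).ne h
  · exact (h'.finMin_lt (hne G' hG') (hne G hG)).ne h.symm

/-- An unordered stand-in for the tuple `F₁ < ⋯ < F_d` in the definition of `conv`: a family of
nonempty sets that are pairwise comparable for `BlockLt` is ordered by its minima
(`mem_conv_iff`), and families are far easier to flatten and regroup than `Fin d`-tuples. -/
structure IsConvDecomposition (P Q : Set (Finset ℕ)) (𝒢 : Finset (Finset ℕ)) : Prop where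
  mem : ∀ G ∈ 𝒢, G ∈ Q
  nonempty : ∀ G ∈ 𝒢, G.Nonempty
  isChain : IsChain BlockLt (𝒢 : Set (Finset ℕ))
  image_finMin_mem : 𝒢.image finMin ∈ P

theorem mem_conv_iff {P Q : Set (Finset ℕ)} {U : Finset ℕ} :
    U ∈ conv P Q ↔ ∃ 𝒢, IsConvDecomposition P Q 𝒢 ∧ U = 𝒢.biUnion id := by
  constructor
  · rintro ⟨d, F, hQ, hne, hlt, hP, rfl⟩
    refine ⟨univ.image F, ⟨?_, ?_, ?_, ?_⟩, by rw [image_biUnion]; rfl⟩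
    · simpa using hQ
    · simpa using hne
    · rw [coe_image]
      rintro _ ⟨i, -, rfl⟩ _ ⟨j, -, rfl⟩ hFij
      rcases lt_trichotomy i j with hij | rfl | hji
      · exact Or.inl (hlt i j hij)
      · exact absurd rfl hFij
      · exact Or.inr (hlt j i hji)
    · rwa [image_image]
  · rintro ⟨𝒢, h𝒢, rfl⟩
    set e := (𝒢.image finMin).orderEmbOfFin rfl
    have hmin : ∀ i, ∃ G ∈ 𝒢, finMin G = e i := fun i =>
      mem_image.1 (orderEmbOfFin_mem _ _ i)
    choose F hF hFmin using hmin
    have h𝒢F : 𝒢 = univ.image F := by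
      ext G
      refine ⟨fun hG => ?_, ?_⟩
      · obtain ⟨i, hi⟩ : finMin G ∈ Set.range e := by
          rw [range_orderEmbOfFin]; exact mem_image_of_mem finMin hG
        refine mem_image.2 ⟨i, mem_univ _, ?_⟩
        exact h𝒢.isChain.eq_of_finMin_eq h𝒢.nonempty (hF i) hG (by rw [hFmin, hi])
      · intro hG
        obtain ⟨i, -, rfl⟩ := mem_image.1 hG
        exact hF i
    have hU : 𝒢.biUnion id = univ.biUnion F := by
      conv_lhs => rw [h𝒢F]
      exact image_biUnion
    refine ⟨_, F, fun i => h𝒢.mem _ (hF i), fun i => h𝒢.nonempty _ (hF i), fun i j hij => ?_,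
      ?_, hU⟩
    · refine h𝒢.isChain.blockLt_of_finMin_lt h𝒢.nonempty (hF i) (hF j) ?_
      rw [hFmin, hFmin]
      exact e.strictMono hij
    · simp_rw [hFmin]
      rw [image_orderEmbOfFin_univ]
      exact h𝒢.image_finMin_mem

theorem IsConvDecomposition.biUnion {P Q R S : Set (Finset ℕ)} {ℋ : Finset (Finset ℕ)}
    (hℋ : IsConvDecomposition P S ℋ) {g : Finset ℕ → Finset (Finset ℕ)}
    (hg : ∀ H ∈ ℋ, IsConvDecomposition Q R (g H)) (hgU : ∀ H ∈ ℋ, H = (g H).biUnion id) :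
    IsConvDecomposition (conv P Q) R (ℋ.biUnion g) := by
  have hsub : ∀ H ∈ ℋ, ∀ G ∈ g H, G ⊆ H := fun H hH G hG => by
    rw [hgU H hH]; exact subset_biUnion_of_mem id hG
  have hgne : ∀ H ∈ ℋ, (g H).Nonempty := fun H hH => by
    obtain ⟨a, ha⟩ := hℋ.nonempty H hH
    rw [hgU H hH, mem_biUnion] at ha
    obtain ⟨G, hG, -⟩ := ha
    exact ⟨G, hG⟩
  refine ⟨?_, ?_, ?_, ?_⟩
  · simp only [mem_biUnion, forall_exists_index, and_imp]
    exact fun G H hH hG => (hg H hH).mem G hG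
  · simp only [mem_biUnion, forall_exists_index, and_imp]
    exact fun G H hH hG => (hg H hH).nonempty G hG
  · simp only [IsChain, Set.Pairwise, coe_biUnion, Set.mem_iUnion, mem_coe, exists_prop]
    rintro G ⟨H, hH, hG⟩ G' ⟨H', hH', hG'⟩ hGG'
    obtain rfl | hHH' := eq_or_ne H H'
    · exact (hg H hH).isChain hG hG' hGG'
    · exact (hℋ.isChain hH hH' hHH').imp (·.mono (hsub H hH G hG) (hsub H' hH' G' hG'))
        (·.mono (hsub H' hH' G' hG') (hsub H hH G hG))
  · set A := fun H => (g H).image finMin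
    have hA : ∀ H ∈ ℋ, A H ⊆ H := fun H hH => by
      have := image_finMin_subset_biUnion (hg H hH).nonempty
      rwa [← hgU H hH] at this
    refine mem_conv_iff.2 ⟨ℋ.image A, ⟨?_, ?_, ?_, ?_⟩, ?_⟩
    · simp only [mem_image, forall_exists_index, and_imp, forall_apply_eq_imp_iff₂]
      exact fun H hH => (hg H hH).image_finMin_mem
    · simp only [mem_image, forall_exists_index, and_imp, forall_apply_eq_imp_iff₂]
      exact fun H hH => (hgne H hH).image finMin
    · rw [coe_image]
      rintro _ ⟨H, hH, rfl⟩ _ ⟨H', hH', rfl⟩ hAA'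
      have hHH' : H ≠ H' := by rintro rfl; exact hAA' rfl
      exact (hℋ.isChain hH hH' hHH').imp (·.mono (hA H hH) (hA H' hH'))
        (·.mono (hA H' hH') (hA H hH))
    · rw [image_image]
      convert hℋ.image_finMin_mem using 1
      refine image_congr fun H hH => ?_
      simp only [Function.comp_apply, A]
      rw [hgU H hH, finMin_biUnion (hg H hH).nonempty, ← hgU H hH]
    · rw [image_biUnion, biUnion_image]
      rfl

theorem conv_conv_subset (P Q R : Set (Finset ℕ)) : conv P (conv Q R) ⊆ conv (conv P Q) R := by
  intro U hU
  obtain ⟨ℋ, hℋ, rfl⟩ := mem_conv_iff.1 hU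
  have hdecomp : ∀ H ∈ ℋ, ∃ 𝒢, IsConvDecomposition Q R 𝒢 ∧ H = 𝒢.biUnion id :=
    fun H hH => mem_conv_iff.1 (hℋ.mem H hH)
  choose! g hg hgU using hdecomp
  refine mem_conv_iff.2 ⟨ℋ.biUnion g, hℋ.biUnion hg hgU, ?_⟩
  rw [biUnion_biUnion]
  exact biUnion_congr rfl hgU

theorem IsConvDecomposition.regroup {P Q R S : Set (Finset ℕ)} {𝒢 ℬ : Finset (Finset ℕ)}
    (h𝒢 : IsConvDecomposition S R 𝒢) (hℬ : IsConvDecomposition P Q ℬ)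
    (hM : 𝒢.image finMin = ℬ.biUnion id) :
    IsConvDecomposition P (conv Q R)
      (ℬ.image fun B => (𝒢.filter (finMin · ∈ B)).biUnion id) := by
  set g := fun B : Finset ℕ => 𝒢.filter (finMin · ∈ B)
  have hgB : ∀ B ∈ ℬ, (g B).image finMin = B := fun B hB => by
    have hBM : B ⊆ 𝒢.image finMin := hM ▸ subset_biUnion_of_mem id hB
    ext a
    simp only [g, mem_image, mem_filter]
    refine ⟨fun ⟨G, ⟨_, hGB⟩, hGa⟩ => hGa ▸ hGB, fun ha => ?_⟩
    obtain ⟨G, hG, rfl⟩ := mem_image.1 (hBM ha)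
    exact ⟨G, ⟨hG, ha⟩, rfl⟩
  have hg : ∀ B ∈ ℬ, IsConvDecomposition Q R (g B) := fun B hB =>
    ⟨fun G hG => h𝒢.mem G (mem_filter.1 hG).1, fun G hG => h𝒢.nonempty G (mem_filter.1 hG).1,
      h𝒢.isChain.mono (coe_subset.2 (filter_subset _ _)), (hgB B hB).symm ▸ hℬ.mem B hB⟩
  have hlt : ∀ B B', BlockLt B B' → BlockLt ((g B).biUnion id) ((g B').biUnion id) := by
    intro B B' hBB' a ha b hb
    obtain ⟨G, hG, haG⟩ := mem_biUnion.1 ha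
    obtain ⟨G', hG', hbG'⟩ := mem_biUnion.1 hb
    rw [mem_filter] at hG hG'
    exact h𝒢.isChain.blockLt_of_finMin_lt h𝒢.nonempty hG.1 hG'.1 (hBB' _ hG.2 _ hG'.2)
      a haG b hbG'
  refine ⟨?_, ?_, ?_, ?_⟩
  · simp only [mem_image, forall_exists_index, and_imp, forall_apply_eq_imp_iff₂]
    exact fun B hB => mem_conv_iff.2 ⟨g B, hg B hB, rfl⟩
  · simp only [mem_image, forall_exists_index, and_imp, forall_apply_eq_imp_iff₂]
    intro B hB
    obtain ⟨G, hG⟩ := image_nonempty.1 ((hgB B hB).symm ▸ hℬ.nonempty B hB)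
    exact biUnion_nonempty.2 ⟨G, hG, (hg B hB).nonempty G hG⟩
  · rw [coe_image]
    rintro _ ⟨B, hB, rfl⟩ _ ⟨B', hB', rfl⟩ hHH'
    have hBB' : B ≠ B' := by rintro rfl; exact hHH' rfl
    exact (hℬ.isChain hB hB' hBB').imp (hlt B B') (hlt B' B)
  · rw [image_image]
    convert hℬ.image_finMin_mem using 1
    refine image_congr fun B hB => ?_
    simp only [Function.comp_apply]
    rw [finMin_biUnion (hg B hB).nonempty, hgB B hB]

theorem conv_subset_conv_conv (P Q R : Set (Finset ℕ)) :
    conv (conv P Q) R ⊆ conv P (conv Q R) := by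
  intro U hU
  obtain ⟨𝒢, h𝒢, rfl⟩ := mem_conv_iff.1 hU
  obtain ⟨ℬ, hℬ, hM⟩ := mem_conv_iff.1 h𝒢.image_finMin_mem
  refine mem_conv_iff.2 ⟨_, h𝒢.regroup hℬ hM, ?_⟩
  have h𝒢ℬ : 𝒢 = ℬ.biUnion fun B => 𝒢.filter (finMin · ∈ B) := by
    ext G
    simp only [mem_biUnion, mem_filter]
    refine ⟨fun hG => ?_, fun ⟨_, _, hG, _⟩ => hG⟩
    obtain ⟨B, hB, hGB⟩ := mem_biUnion.1 (hM ▸ mem_image_of_mem finMin hG)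
    exact ⟨B, hB, hG, hGB⟩
  conv_lhs => rw [h𝒢ℬ, biUnion_biUnion]
  rw [image_biUnion]
  rfl

theorem conv_assoc (P Q R : Set (Finset ℕ)) : conv P (conv Q R) = conv (conv P Q) R :=
  (conv_conv_subset P Q R).antisymm (conv_subset_conv_conv P Q R)

theorem schreier_succ {n : ℕ} (hn : 1 ≤ n) : Schreier (n + 1) = conv (Schreier 1) (Schreier n) := by
  obtain ⟨m, rfl⟩ := Nat.exists_eq_add_of_le' hn
  rfl

theorem schreier_add {k l : ℕ} (hk : 1 ≤ k) (hl : 1 ≤ l) :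
    Schreier (l + k) = conv (Schreier l) (Schreier k) := by
  induction l, hl using Nat.le_induction with
  | base => rw [Nat.add_comm, schreier_succ hk]
  | succ l hl ih =>
    rw [Nat.add_right_comm, schreier_succ (by omega), ih, conv_assoc, ← schreier_succ hl]

/-- For all `k, l ≥ 1`, the Schreier families satisfy
`S_{l+k} = S_l[S_k] = S_k[S_l]`. -/
theorem schreier_convolution (k l : ℕ) (hk : 1 ≤ k) (hl : 1 ≤ l) :
    Schreier (l + k) = conv (Schreier l) (Schreier k) ∧
    Schreier (l + k) = conv (Schreier k) (Schreier l) :=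
  ⟨schreier_add hk hl, Nat.add_comm l k ▸ schreier_add hl hk⟩
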